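/- arXiv:2103.04455 — 3 statements merged into one kernel-verified Lean document; each statement's English description precedes it below -/
import Mathlib

section
/- If S ⊆ S_Φ is a nonempty s-convex set, then 0 ∉ conv S. -/
open Set
open scoped RealInnerProductSpace

/-- `rho Φ x = x / Φ x` (equal to `0` when `Φ x = 0`, in particular `rho Φ 0 = 0`). -/
noncomputable def rho {n : ℕ} (Φ : EuclideanSpace ℝ (Fin n) → ℝ)
    (x : EuclideanSpace ℝ (Fin n)) : EuclideanSpace ℝ (Fin n) := (Φ x)⁻¹ • x

/-- The `Φ`-sphere `S_Φ = {x | Φ x = 1}`. -/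
def sphereSet {n : ℕ} (Φ : EuclideanSpace ℝ (Fin n) → ℝ) : Set (EuclideanSpace ℝ (Fin n)) :=
  {x | Φ x = 1}

/-- `S` is s-convex: `ρ(λx + (1-λ)y) ∈ S` for all `x, y ∈ S`, `λ ∈ [0,1]`. -/
def SConvex {n : ℕ} (Φ : EuclideanSpace ℝ (Fin n) → ℝ)
    (S : Set (EuclideanSpace ℝ (Fin n))) : Prop :=
  ∀ x ∈ S, ∀ y ∈ S, ∀ l : ℝ, l ∈ Set.Icc (0 : ℝ) 1 → rho Φ (l • x + (1 - l) • y) ∈ S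

/-! The positive multiples `Ioi 0 • S` of an s-convex `S ⊆ S_Φ` form a convex set: a positive
combination `t₁ s₁ + t₂ s₂` is a positive multiple of `y = μ s₁ + (1 - μ) s₂` with
`μ = t₁ / (t₁ + t₂)`, and `y = Φ(y) ρ(y)` with `ρ(y) ∈ S`. This convex set contains `S` but not `0`,
so neither does `conv S`. -/

open scoped Pointwise

section

variable {n : ℕ} {Φ : EuclideanSpace ℝ (Fin n) → ℝ} {S : Set (EuclideanSpace ℝ (Fin n))}

lemma smul_rho_self {x : EuclideanSpace ℝ (Fin n)} (hx : Φ x ≠ 0) : Φ x • rho Φ x = x := by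
  rw [rho, smul_smul, mul_inv_cancel₀ hx, one_smul]

lemma apply_ne_zero_of_rho_mem_sphereSet (h0 : Φ 0 = 0) {x : EuclideanSpace ℝ (Fin n)}
    (hx : rho Φ x ∈ sphereSet Φ) : Φ x ≠ 0 := by
  intro hΦx
  have : Φ (rho Φ x) = 1 := hx
  rw [rho, hΦx, inv_zero, zero_smul, h0] at this
  exact zero_ne_one this

lemma add_smul_mem_Ioi_smul_of_sConvex (hnn : ∀ x, 0 ≤ Φ x) (h0 : Φ 0 = 0)
    (hsub : S ⊆ sphereSet Φ) (hS : SConvex Φ S) {s₁ s₂ : EuclideanSpace ℝ (Fin n)}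
    (hs₁ : s₁ ∈ S) (hs₂ : s₂ ∈ S) {t₁ t₂ : ℝ} (ht₁ : 0 < t₁) (ht₂ : 0 < t₂) :
    t₁ • s₁ + t₂ • s₂ ∈ Ioi (0 : ℝ) • S := by
  set c := t₁ + t₂
  have hc : 0 < c := add_pos ht₁ ht₂
  set μ := t₁ / c
  set y := μ • s₁ + (1 - μ) • s₂
  have hμ : μ ∈ Icc (0 : ℝ) 1 :=
    ⟨div_nonneg ht₁.le hc.le, (div_le_one hc).mpr (le_add_of_nonneg_right ht₂.le)⟩
  have hρy : rho Φ y ∈ S := hS s₁ hs₁ s₂ hs₂ μ hμ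
  have hΦy : Φ y ≠ 0 := apply_ne_zero_of_rho_mem_sphereSet h0 (hsub hρy)
  have hcμ : c * μ = t₁ := mul_div_cancel₀ t₁ hc.ne'
  have hcy : c • y = t₁ • s₁ + t₂ • s₂ := by
    rw [smul_add, smul_smul, smul_smul, hcμ, mul_sub, mul_one, hcμ, add_sub_cancel_left]
  refine ⟨c * Φ y, mul_pos hc ((hnn y).lt_of_ne' hΦy), rho Φ y, hρy, ?_⟩
  show (c * Φ y) • rho Φ y = _
  rw [mul_smul, smul_rho_self hΦy, hcy]

lemma SConvex.convex_Ioi_smul (hS : SConvex Φ S) (hnn : ∀ x, 0 ≤ Φ x) (h0 : Φ 0 = 0)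
    (hsub : S ⊆ sphereSet Φ) : Convex ℝ (Ioi (0 : ℝ) • S) := by
  rw [convex_iff_forall_pos]
  rintro _ ⟨t₁, ht₁, s₁, hs₁, rfl⟩ _ ⟨t₂, ht₂, s₂, hs₂, rfl⟩ a b ha hb -
  rw [smul_smul, smul_smul]
  exact add_smul_mem_Ioi_smul_of_sConvex hnn h0 hsub hS hs₁ hs₂
    (mul_pos ha (mem_Ioi.mp ht₁)) (mul_pos hb (mem_Ioi.mp ht₂))

lemma zero_notMem_Ioi_smul (h0 : Φ 0 = 0) (hsub : S ⊆ sphereSet Φ) :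
    (0 : EuclideanSpace ℝ (Fin n)) ∉ Ioi (0 : ℝ) • S := by
  rintro ⟨t, ht, s, hs, hts⟩
  have hs0 : s = 0 := (smul_eq_zero.mp hts).resolve_left (ne_of_gt ht)
  have : Φ s = 1 := hsub hs
  rw [hs0, h0] at this
  exact zero_ne_one this

end

theorem stmt6_general {n : ℕ} (Φ : EuclideanSpace ℝ (Fin n) → ℝ)
    (hnn : ∀ x, 0 ≤ Φ x)
    (hzero : ∀ x, Φ x = 0 ↔ x = 0)
    (S : Set (EuclideanSpace ℝ (Fin n))) (hsub : S ⊆ sphereSet Φ)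
    (hS : SConvex Φ S) :
    (0 : EuclideanSpace ℝ (Fin n)) ∉ convexHull ℝ S := by
  have h0 : Φ 0 = 0 := (hzero 0).mpr rfl
  have hS_sub : S ⊆ Ioi (0 : ℝ) • S := fun s hs => ⟨1, mem_Ioi.mpr one_pos, s, hs, one_smul ℝ s⟩
  exact fun hmem => zero_notMem_Ioi_smul h0 hsub
    (convexHull_min hS_sub (hS.convex_Ioi_smul hnn h0 hsub) hmem)

theorem stmt6 {n : ℕ} (hn : 2 ≤ n) (Φ : EuclideanSpace ℝ (Fin n) → ℝ)
    (hc : Continuous Φ) (hnn : ∀ x, 0 ≤ Φ x)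
    (hhom : ∀ (t : ℝ), 0 ≤ t → ∀ x, Φ (t • x) = t * Φ x)
    (hzero : ∀ x, Φ x = 0 ↔ x = 0)
    (S : Set (EuclideanSpace ℝ (Fin n))) (hne : S.Nonempty) (hsub : S ⊆ sphereSet Φ)
    (hS : SConvex Φ S) :
    (0 : EuclideanSpace ℝ (Fin n)) ∉ convexHull ℝ S :=
  stmt6_general Φ hnn hzero S hsub hS
end

section
/- Suppose Φ is moreover convex. Let S ⊆ S_Φ be nonempty and contained in {x : ⟨x,u⟩ ≥ α} for some unit vector u and α > 0. Then the closure of sco S := ρ(conv S) equals the intersection of all closed s-convex subsets of S_Φ containing S; in particular cl(sco S) is the smallest closed s-convex set containing S. -/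
open Set
open scoped RealInnerProductSpace

/-!
Rescaling by positive factors only reparametrizes segments: `ρ(λ p a + (1 - λ) q b)` is `ρ` of
another point of `[a, b]`. Hence `ρ(conv S)` is s-convex, and for every s-convex `C ⊇ S` the set
`{a ∈ conv S | ρ a ∈ C}` is convex and contains `S`, so `ρ(conv S) ⊆ C`. For the closure: since
`Φ ≤ 1` on `conv S`, all of `ρ(conv S)` lies in the closed halfspace `⟪x, u⟫ ≥ α`, which avoids `0`;
there `ρ` is continuous, so the closure of `ρ(conv S)` is still s-convex.
-/

section

variable {n : ℕ} {Φ : EuclideanSpace ℝ (Fin n) → ℝ}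

local notation "E" => EuclideanSpace ℝ (Fin n)

theorem rho_smul (hhom : ∀ t : ℝ, 0 ≤ t → ∀ x, Φ (t • x) = t * Φ x) {t : ℝ} (ht : 0 < t)
    (x : E) : rho Φ (t • x) = rho Φ x := by
  rw [rho, rho, hhom t ht.le, smul_smul, mul_inv_rev, mul_assoc, inv_mul_cancel₀ ht.ne',
    mul_one]

theorem smul_rho {x : E} (hx : Φ x ≠ 0) : Φ x • rho Φ x = x := by
  rw [rho, smul_smul, mul_inv_cancel₀ hx, one_smul]

theorem rho_of_mem_sphereSet {x : E} (hx : x ∈ sphereSet Φ) : rho Φ x = x := by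
  rw [rho, show Φ x = 1 from hx, inv_one, one_smul]

theorem rho_mem_sphereSet (hhom : ∀ t : ℝ, 0 ≤ t → ∀ x, Φ (t • x) = t * Φ x) {x : E}
    (hx : 0 < Φ x) : rho Φ x ∈ sphereSet Φ := by
  show Φ ((Φ x)⁻¹ • x) = 1
  rw [hhom _ (inv_nonneg.2 hx.le), inv_mul_cancel₀ hx.ne']

theorem continuousAt_rho (hc : Continuous Φ) {x : E} (hx : Φ x ≠ 0) :
    ContinuousAt (rho Φ) x :=
  (hc.continuousAt.inv₀ hx).smul continuousAt_id

theorem le_inner_rho_of_le_one {α : ℝ} (hα : 0 < α) {x u : E} (hx : α ≤ ⟪x, u⟫)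
    (hΦ₀ : 0 < Φ x) (hΦ₁ : Φ x ≤ 1) : α ≤ ⟪rho Φ x, u⟫ := by
  rw [rho, real_inner_smul_left]
  calc α ≤ ⟪x, u⟫ := hx
    _ ≤ (Φ x)⁻¹ * ⟪x, u⟫ := le_mul_of_one_le_left (by linarith) ((one_le_inv₀ hΦ₀).2 hΦ₁)

theorem exists_rho_combo_smul_eq (hhom : ∀ t : ℝ, 0 ≤ t → ∀ x, Φ (t • x) = t * Φ x)
    (a b : E) {p q l : ℝ} (hp : 0 < p) (hq : 0 < q) (hl : l ∈ Icc (0 : ℝ) 1) :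
    ∃ m ∈ Icc (0 : ℝ) 1,
      rho Φ (l • (p • a) + (1 - l) • (q • b)) = rho Φ (m • a + (1 - m) • b) := by
  obtain ⟨hl₀, hl₁⟩ := hl
  set s := l * p + (1 - l) * q
  have hs : 0 < s := by nlinarith [mul_nonneg hl₀ hp.le, mul_nonneg (sub_nonneg.2 hl₁) hq.le]
  have hm : s * (l * p / s) = l * p := mul_div_cancel₀ _ hs.ne'
  have hm' : s * (1 - l * p / s) = (1 - l) * q := by rw [mul_sub, hm, mul_one]; ring
  refine ⟨l * p / s, ⟨by positivity, (div_le_one hs).2 ?_⟩, ?_⟩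
  · nlinarith [mul_nonneg (sub_nonneg.2 hl₁) hq.le]
  · rw [← rho_smul hhom hs ((l * p / s) • a + (1 - l * p / s) • b), smul_add, smul_smul s,
      smul_smul s, hm, hm', mul_smul, mul_smul]

theorem sConvex_rho_image (hhom : ∀ t : ℝ, 0 ≤ t → ∀ x, Φ (t • x) = t * Φ x)
    (hpos : ∀ x, x ≠ 0 → 0 < Φ x) {K : Set E} (hK : Convex ℝ K) (hK₀ : (0 : E) ∉ K) :
    SConvex Φ (rho Φ '' K) := by
  rintro _ ⟨a, ha, rfl⟩ _ ⟨b, hb, rfl⟩ l hl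
  obtain ⟨m, hm, heq⟩ := exists_rho_combo_smul_eq hhom a b
    (inv_pos.2 (hpos a (ne_of_mem_of_not_mem ha hK₀)))
    (inv_pos.2 (hpos b (ne_of_mem_of_not_mem hb hK₀))) hl
  exact ⟨m • a + (1 - m) • b, hK ha hb hm.1 (sub_nonneg.2 hm.2) (add_sub_cancel _ _), heq.symm⟩

namespace SConvex

theorem convex_inter_preimage_rho (hhom : ∀ t : ℝ, 0 ≤ t → ∀ x, Φ (t • x) = t * Φ x)
    (hpos : ∀ x, x ≠ 0 → 0 < Φ x) {K C : Set E} (hK : Convex ℝ K) (hK₀ : (0 : E) ∉ K)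
    (hC : SConvex Φ C) : Convex ℝ (K ∩ rho Φ ⁻¹' C) := by
  rintro a ⟨haK, haC⟩ b ⟨hbK, hbC⟩ l l' hl hl' hsum
  refine ⟨hK haK hbK hl hl' hsum, ?_⟩
  have hΦa := hpos a (ne_of_mem_of_not_mem haK hK₀)
  have hΦb := hpos b (ne_of_mem_of_not_mem hbK hK₀)
  obtain ⟨m, hm, heq⟩ := exists_rho_combo_smul_eq hhom (rho Φ a) (rho Φ b) hΦa hΦb
    ⟨hl, by linarith⟩
  rw [smul_rho hΦa.ne', smul_rho hΦb.ne'] at heq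
  obtain rfl : l' = 1 - l := by linarith
  rw [mem_preimage, heq]
  exact hC _ haC _ hbC m hm

theorem rho_image_convexHull_subset (hhom : ∀ t : ℝ, 0 ≤ t → ∀ x, Φ (t • x) = t * Φ x)
    (hpos : ∀ x, x ≠ 0 → 0 < Φ x) {S C : Set E} (hC : SConvex Φ C)
    (h₀ : (0 : E) ∉ convexHull ℝ S) (hS : S ⊆ sphereSet Φ) (hSC : S ⊆ C) :
    rho Φ '' convexHull ℝ S ⊆ C := by
  have hSP : S ⊆ convexHull ℝ S ∩ rho Φ ⁻¹' C := fun x hx =>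
    ⟨subset_convexHull ℝ S hx, by rw [mem_preimage, rho_of_mem_sphereSet (hS hx)]; exact hSC hx⟩
  exact image_subset_iff.2 fun a ha =>
    (convexHull_min hSP (hC.convex_inter_preimage_rho hhom hpos (convex_convexHull ℝ S) h₀) ha).2

protected theorem closure (hc : Continuous Φ) (hpos : ∀ x, x ≠ 0 → 0 < Φ x) {K C : Set E}
    (hK : Convex ℝ K) (hKc : IsClosed K) (hK₀ : (0 : E) ∉ K) (hCK : C ⊆ K)
    (hC : SConvex Φ C) : SConvex Φ (closure C) := by
  intro x hx y hy l hl
  set g : E × E → E := fun p => rho Φ (l • p.1 + (1 - l) • p.2)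
  have hcombo : ∀ p ∈ K ×ˢ K, l • p.1 + (1 - l) • p.2 ∈ K := fun p hp =>
    hK hp.1 hp.2 hl.1 (sub_nonneg.2 hl.2) (add_sub_cancel _ _)
  have hg : ContinuousOn g (K ×ˢ K) := fun p hp =>
    ((continuousAt_rho hc (hpos _ (ne_of_mem_of_not_mem (hcombo p hp) hK₀)).ne').comp
      (f := fun p : E × E => l • p.1 + (1 - l) • p.2) (by fun_prop)).continuousWithinAt
  have hxy : (x, y) ∈ closure (C ×ˢ C) := by rw [closure_prod_eq]; exact ⟨hx, hy⟩
  have hgxy : g (x, y) ∈ closure (g '' (C ×ˢ C)) :=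
    (hg.mono (closure_minimal (prod_mono hCK hCK) (hKc.prod hKc))).image_closure ⟨_, hxy, rfl⟩
  exact closure_mono (image_subset_iff.2 fun p hp => hC _ hp.1 _ hp.2 l hl) hgxy

end SConvex

end

theorem stmt16_general {n : ℕ} (Φ : EuclideanSpace ℝ (Fin n) → ℝ)
    (hc : Continuous Φ) (hnn : ∀ x, 0 ≤ Φ x)
    (hhom : ∀ (t : ℝ), 0 ≤ t → ∀ x, Φ (t • x) = t * Φ x)
    (hzero : ∀ x, Φ x = 0 ↔ x = 0)
    (hconv : ConvexOn ℝ Set.univ Φ)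
    (S : Set (EuclideanSpace ℝ (Fin n))) (hsub : S ⊆ sphereSet Φ)
    (u : EuclideanSpace ℝ (Fin n)) (α : ℝ) (hα : 0 < α)
    (hhs : ∀ x ∈ S, α ≤ ⟪x, u⟫) :
    closure (rho Φ '' (convexHull ℝ S)) =
      ⋂₀ {C : Set (EuclideanSpace ℝ (Fin n)) |
        C ⊆ sphereSet Φ ∧ IsClosed C ∧ SConvex Φ C ∧ S ⊆ C} := by
  have hpos : ∀ x, x ≠ 0 → 0 < Φ x := fun x hx => (hnn x).lt_of_ne' (mt (hzero x).1 hx)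
  set H := {x : EuclideanSpace ℝ (Fin n) | α ≤ ⟪x, u⟫}
  have hH : Convex ℝ H := 
    convex_halfSpace_ge (f := fun x => ⟪x, u⟫) ⟨fun x y => inner_add_left x y u, fun c x => real_inner_smul_left x u c⟩ α
  have hHc : IsClosed H := isClosed_le continuous_const (continuous_id.inner continuous_const)
  have hH₀ : (0 : EuclideanSpace ℝ (Fin n)) ∉ H := by simpa [H] using hα
  have hSH : convexHull ℝ S ⊆ H := convexHull_min hhs hH
  have hS₀ : (0 : EuclideanSpace ℝ (Fin n)) ∉ convexHull ℝ S := fun h => hH₀ (hSH h)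
  have hS₁ : convexHull ℝ S ⊆ {x | Φ x ≤ 1} :=
    convexHull_min (fun x hx => (hsub hx).le) (by simpa using hconv.convex_le 1)
  have hΦS : ∀ a ∈ convexHull ℝ S, 0 < Φ a := fun a ha => hpos a (ne_of_mem_of_not_mem ha hS₀)
  have hTH : rho Φ '' convexHull ℝ S ⊆ H := image_subset_iff.2 fun a ha =>
    le_inner_rho_of_le_one hα (hSH ha) (hΦS a ha) (hS₁ ha)
  have hTsphere : closure (rho Φ '' convexHull ℝ S) ⊆ sphereSet Φ :=
    closure_minimal (image_subset_iff.2 fun a ha => rho_mem_sphereSet hhom (hΦS a ha))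
      (isClosed_eq hc continuous_const)
  have hST : S ⊆ rho Φ '' convexHull ℝ S := fun x hx =>
    ⟨x, subset_convexHull ℝ S hx, rho_of_mem_sphereSet (hsub hx)⟩
  refine Subset.antisymm ?_ (sInter_subset_of_mem ⟨hTsphere, isClosed_closure, ?_,
    hST.trans subset_closure⟩)
  · rintro x hx C ⟨-, hCc, hC, hSC⟩
    exact closure_minimal (hC.rho_image_convexHull_subset hhom hpos hS₀ hsub hSC) hCc hx
  · exact (sConvex_rho_image hhom hpos (convex_convexHull ℝ S) hS₀).closure hc hpos hH hHc hH₀ hTH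

theorem stmt16 {n : ℕ} (hn : 2 ≤ n) (Φ : EuclideanSpace ℝ (Fin n) → ℝ)
    (hc : Continuous Φ) (hnn : ∀ x, 0 ≤ Φ x)
    (hhom : ∀ (t : ℝ), 0 ≤ t → ∀ x, Φ (t • x) = t * Φ x)
    (hzero : ∀ x, Φ x = 0 ↔ x = 0)
    (hconv : ConvexOn ℝ Set.univ Φ)
    (S : Set (EuclideanSpace ℝ (Fin n))) (hne : S.Nonempty) (hsub : S ⊆ sphereSet Φ)
    (u : EuclideanSpace ℝ (Fin n)) (hu : ‖u‖ = 1) (α : ℝ) (hα : 0 < α)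
    (hhs : ∀ x ∈ S, α ≤ ⟪x, u⟫) :
    closure (rho Φ '' (convexHull ℝ S)) =
      ⋂₀ {C : Set (EuclideanSpace ℝ (Fin n)) |
        C ⊆ sphereSet Φ ∧ IsClosed C ∧ SConvex Φ C ∧ S ⊆ C} :=
  stmt16_general Φ hc hnn hhom hzero hconv S hsub u α hα hhs
end

section
/- (Radon-type theorem) Let S ⊆ S_Φ with card S ≥ n+1 and 0 ∉ conv S. Then there exist disjoint nonempty sets S₁, S₂ with S₁ ∪ S₂ = S such that sco S₁ ∩ sco S₂ ≠ ∅, where sco Sᵢ := ρ(conv Sᵢ). -/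
/-!
Take `n + 1` points of `S`; they satisfy a nontrivial linear relation `∑ f x • x = 0`.
Since `0 ∉ conv S`, the coefficients take both signs, and moving the negative ones to the other
side exhibits a positive multiple of a point of the hull of `{f > 0}` as a positive multiple of
a point of the hull of `{f ≤ 0}`. Being positively homogeneous, `ρ` identifies the two.
-/

open Set
open scoped RealInnerProductSpace

section LinearRadon

variable {𝕜 E : Type*} [Field 𝕜] [LinearOrder 𝕜] [IsStrictOrderedRing 𝕜]
  [AddCommGroup E] [Module 𝕜 E]

lemma zero_mem_convexHull_of_sum_smul_eq_zero {t : Finset E} {w : E → 𝕜}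
    (hw₀ : ∀ x ∈ t, 0 ≤ w x) (hw : 0 < ∑ x ∈ t, w x) (hsum : ∑ x ∈ t, w x • x = 0) :
    (0 : E) ∈ convexHull 𝕜 (t : Set E) := by
  simpa [Finset.centerMass, hsum] using
    t.centerMass_mem_convexHull hw₀ hw (fun _ hx ↦ hx) (z := id)

lemma exists_pos_of_sum_smul_eq_zero {t : Finset E} {f : E → 𝕜}
    (h₀ : (0 : E) ∉ convexHull 𝕜 (t : Set E)) (hsum : ∑ x ∈ t, f x • x = 0)
    {x₀ : E} (hx₀ : x₀ ∈ t) (hf : f x₀ ≠ 0) : ∃ x ∈ t, 0 < f x := by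
  by_contra! hle
  refine h₀ (zero_mem_convexHull_of_sum_smul_eq_zero (w := fun x ↦ -f x)
    (fun x hx ↦ neg_nonneg.2 (hle x hx)) ?_ ?_)
  · exact Finset.sum_pos' (fun x hx ↦ neg_nonneg.2 (hle x hx))
      ⟨x₀, hx₀, neg_pos.2 ((hle x₀ hx₀).lt_of_ne hf)⟩
  · simp [neg_smul, hsum]

theorem exists_smul_eq_of_finrank_lt_card [FiniteDimensional 𝕜 E] {t : Finset E}
    (ht : Module.finrank 𝕜 E < t.card) (h₀ : (0 : E) ∉ convexHull 𝕜 (t : Set E)) :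
    ∃ I ⊆ t, ∃ p ∈ convexHull 𝕜 (I : Set E), ∃ q ∈ convexHull 𝕜 ((t : Set E) \ I),
      ∃ a b : 𝕜, 0 < a ∧ 0 < b ∧ a • p = b • q := by
  classical
  obtain ⟨f, hsum, x₀, hx₀, hf⟩ := Module.exists_nontrivial_relation_of_finrank_lt_card ht
  set I := t.filter (fun x ↦ 0 < f x)
  have hI : t \ I = t.filter (fun x ↦ ¬ 0 < f x) := (Finset.filter_not _ _).symm
  obtain ⟨y, hy, hfy⟩ := exists_pos_of_sum_smul_eq_zero h₀ hsum hx₀ hf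
  obtain ⟨z, hz, hfz⟩ := exists_pos_of_sum_smul_eq_zero (f := fun x ↦ -f x) h₀
    (by simp [neg_smul, hsum]) hx₀ (neg_ne_zero.2 hf)
  have hA : 0 < ∑ x ∈ I, f x :=
    Finset.sum_pos' (fun x hx ↦ (Finset.mem_filter.1 hx).2.le)
      ⟨y, Finset.mem_filter.2 ⟨hy, hfy⟩, hfy⟩
  have hJ₀ : ∀ x ∈ t \ I, 0 ≤ -f x := fun x hx ↦ by
    rw [hI, Finset.mem_filter] at hx; linarith [not_lt.1 hx.2]
  have hB : 0 < ∑ x ∈ t \ I, -f x :=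
    Finset.sum_pos' hJ₀ ⟨z, by rw [hI, Finset.mem_filter]; exact ⟨hz, by linarith⟩, hfz⟩
  have hbalance : ∑ x ∈ I, f x • x = ∑ x ∈ t \ I, -f x • x := by
    simp only [hI, neg_smul, Finset.sum_neg_distrib]
    rw [eq_neg_iff_add_eq_zero, Finset.sum_filter_add_sum_filter_not, hsum]
  refine ⟨I, Finset.filter_subset _ _, _,
    I.centerMass_mem_convexHull (fun x hx ↦ (Finset.mem_filter.1 hx).2.le) hA (fun _ hx ↦ hx),
    _, Finset.coe_sdiff t I ▸ (t \ I).centerMass_mem_convexHull hJ₀ hB (fun _ hx ↦ hx),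
    _, _, hA, hB, ?_⟩
  simp only [Finset.centerMass, smul_inv_smul₀ hA.ne', smul_inv_smul₀ hB.ne', hbalance]

end LinearRadon

lemma Set.exists_finset_subset_card_eq {α : Type*} {s : Set α} {k : ℕ}
    (hk : (k : ℕ∞) ≤ s.encard) :
    ∃ t : Finset α, (t : Set α) ⊆ s ∧ t.card = k := by
  obtain ⟨T, hTs, hT⟩ := Set.exists_subset_encard_eq hk
  obtain ⟨t, rfl⟩ := (Set.finite_of_encard_eq_coe hT).exists_finset_coe
  exact ⟨t, hTs, by exact_mod_cast hT⟩

lemma rho_smul_of_pos {n : ℕ} {Φ : EuclideanSpace ℝ (Fin n) → ℝ}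
    (hhom : ∀ (t : ℝ), 0 ≤ t → ∀ x, Φ (t • x) = t * Φ x) {c : ℝ} (hc : 0 < c)
    (x : EuclideanSpace ℝ (Fin n)) : rho Φ (c • x) = rho Φ x := by
  rw [rho, rho, hhom c hc.le, smul_smul, mul_inv, mul_right_comm, inv_mul_cancel₀ hc.ne', one_mul]

theorem stmt17_general {n : ℕ} (Φ : EuclideanSpace ℝ (Fin n) → ℝ)
    (hhom : ∀ (t : ℝ), 0 ≤ t → ∀ x, Φ (t • x) = t * Φ x)
    (S : Set (EuclideanSpace ℝ (Fin n)))
    (hcard : (n + 1 : ℕ∞) ≤ S.encard)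
    (hha : (0 : EuclideanSpace ℝ (Fin n)) ∉ convexHull ℝ S) :
    ∃ S₁ S₂ : Set (EuclideanSpace ℝ (Fin n)),
      S₁.Nonempty ∧ S₂.Nonempty ∧ Disjoint S₁ S₂ ∧ S₁ ∪ S₂ = S ∧
      (rho Φ '' (convexHull ℝ S₁) ∩ rho Φ '' (convexHull ℝ S₂)).Nonempty := by
  obtain ⟨t, htS, htcard⟩ :=
    Set.exists_finset_subset_card_eq (k := n + 1) (by exact_mod_cast hcard)
  obtain ⟨I, hIt, p, hp, q, hq, a, b, ha, hb, hpq⟩ := exists_smul_eq_of_finrank_lt_card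
    (by rw [finrank_euclideanSpace_fin, htcard]; omega) (fun h ↦ hha (convexHull_mono htS h))
  have hIS : (I : Set _) ⊆ S := (Finset.coe_subset.2 hIt).trans htS
  have hq' : q ∈ convexHull ℝ (S \ I) := convexHull_mono (sdiff_subset_sdiff_left htS) hq
  refine ⟨I, S \ I, convexHull_nonempty_iff.1 ⟨p, hp⟩, convexHull_nonempty_iff.1 ⟨q, hq'⟩,
    disjoint_sdiff_right, union_sdiff_cancel hIS, rho Φ p, ⟨p, hp, rfl⟩, q, hq', ?_⟩
  rw [← rho_smul_of_pos hhom hb, ← hpq, rho_smul_of_pos hhom ha]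

theorem stmt17 {n : ℕ} (hn : 2 ≤ n) (Φ : EuclideanSpace ℝ (Fin n) → ℝ)
    (hc : Continuous Φ) (hnn : ∀ x, 0 ≤ Φ x)
    (hhom : ∀ (t : ℝ), 0 ≤ t → ∀ x, Φ (t • x) = t * Φ x)
    (hzero : ∀ x, Φ x = 0 ↔ x = 0)
    (S : Set (EuclideanSpace ℝ (Fin n))) (hsub : S ⊆ sphereSet Φ)
    (hcard : (n + 1 : ℕ∞) ≤ S.encard)
    (hha : (0 : EuclideanSpace ℝ (Fin n)) ∉ convexHull ℝ S) :
    ∃ S₁ S₂ : Set (EuclideanSpace ℝ (Fin n)),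
      S₁.Nonempty ∧ S₂.Nonempty ∧ Disjoint S₁ S₂ ∧ S₁ ∪ S₂ = S ∧
      (rho Φ '' (convexHull ℝ S₁) ∩ rho Φ '' (convexHull ℝ S₂)).Nonempty :=
  stmt17_general Φ hhom S hcard hha
end
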